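/- arXiv:0903.2124 — 3 statements merged into one kernel-verified Lean document; each statement's English description precedes it below -/
import Mathlib

section
/- (Necessity of the balancing condition.) Let ‖·‖ be a smooth norm on ℝ^n, let p₁,…,p_m, q be nonzero points with dual vectors p_i*, q*, let t_i > 0 and let w be a weight function. If the star network with center o (the origin), edges op_i carrying flow t_i with cost w(t_i)‖p_i‖ and edge oq carrying flow Σt_i with cost w(Σt_i)‖q‖, minimizes cost over all positions of the center point, then Σ_{i=1}^m w(t_i) p_i* + w(Σ_{i=1}^m t_i) q* = 0. -/
open scoped InnerProductSpace
open InnerProductSpace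

/-!
Moving the center from `o` to `s` changes the cost to
`F s = ∑ w(tᵢ) N(pᵢ - s) + w(∑ tᵢ) N(q - s)`, which is therefore minimal at `s = 0`, so its
derivative `-(∑ w(tᵢ) ∇N(pᵢ) + w(∑ tᵢ) ∇N(q))` vanishes there. At a nonzero `x` the dual vector
`x*` is the gradient of `N`: the linear form `⟪x*, ·⟫` lies below `N` and touches it at `x`, so
`N - ⟪x*, ·⟫` has a minimum at `x` and hence zero derivative.
-/

noncomputable def dualNorm {n : ℕ} (N : EuclideanSpace ℝ (Fin n) → ℝ)
    (z : EuclideanSpace ℝ (Fin n)) : ℝ :=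
  sSup ((fun x => (inner ℝ z x : ℝ)) '' {x | N x ≤ 1})

def IsNorm {n : ℕ} (N : EuclideanSpace ℝ (Fin n) → ℝ) : Prop :=
  (∀ x, 0 ≤ N x) ∧ (∀ x, N x = 0 ↔ x = 0) ∧
  (∀ (a : ℝ) (x : EuclideanSpace ℝ (Fin n)), N (a • x) = |a| * N x) ∧
  (∀ x y, N (x + y) ≤ N x + N y)

lemma inner_le_of_dualNorm_eq_one {n : ℕ} {N : EuclideanSpace ℝ (Fin n) → ℝ} (hN : IsNorm N)
    {z : EuclideanSpace ℝ (Fin n)} (hz : dualNorm N z = 1) (y : EuclideanSpace ℝ (Fin n)) :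
    ⟪z, y⟫_ℝ ≤ N y := by
  obtain ⟨hnonneg, hzero, hsmul, -⟩ := hN
  rcases eq_or_ne y 0 with rfl | hy
  · simpa using hnonneg 0
  have hNy : 0 < N y := (hnonneg y).lt_of_ne' (mt (hzero y).mp hy)
  have hbdd : BddAbove ((fun x => ⟪z, x⟫_ℝ) '' {x | N x ≤ 1}) := by
    by_contra h
    rw [dualNorm, Real.sSup_of_not_bddAbove h] at hz
    exact zero_ne_one hz
  have hunit : N ((N y)⁻¹ • y) ≤ 1 := by
    rw [hsmul, abs_of_pos (inv_pos.mpr hNy), inv_mul_cancel₀ hNy.ne']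
  have hle : ⟪z, (N y)⁻¹ • y⟫_ℝ ≤ 1 := hz ▸ le_csSup hbdd ⟨_, hunit, rfl⟩
  rw [real_inner_smul_right, inv_mul_le_iff₀ hNy, mul_one] at hle
  exact hle

section Supporting

variable {E : Type*} [NormedAddCommGroup E] [InnerProductSpace ℝ E] [CompleteSpace E]

theorem hasGradientAt_of_inner_le {f : E → ℝ} {x z : E} (hf : DifferentiableAt ℝ f x)
    (hx : ⟪z, x⟫_ℝ = f x) (hle : ∀ y, ⟪z, y⟫_ℝ ≤ f y) : HasGradientAt f z x := by
  have hmin : IsLocalMin (fun y => f y - ⟪z, y⟫_ℝ) x :=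
    Filter.Eventually.of_forall fun y => by simpa [hx] using hle y
  have hzero := hmin.hasFDerivAt_eq_zero (hf.hasFDerivAt.sub (innerSL ℝ z).hasFDerivAt)
  refine hf.hasFDerivAt.congr_fderiv ?_
  ext y
  simpa [sub_eq_zero] using congrArg (· y) hzero

theorem HasGradientAt.const_mul_comp_const_sub {f : E → ℝ} {a g : E} (hf : HasGradientAt f g a)
    (c : ℝ) : HasGradientAt (fun s => c * f (a - s)) (-(c • g)) 0 := by
  rw [hasGradientAt_iff_hasFDerivAt, ← sub_zero a] at hf
  refine ((hf.comp 0 ((hasFDerivAt_id 0).const_sub a)).const_mul c).congr_fderiv ?_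
  ext y
  simp

end Supporting

theorem balancing_necessary_general {n m : ℕ} (N : EuclideanSpace ℝ (Fin n) → ℝ)
    (hN : IsNorm N)
    (hsmooth : ∀ x : EuclideanSpace ℝ (Fin n), x ≠ 0 → DifferentiableAt ℝ N x)
    (p : Fin m → EuclideanSpace ℝ (Fin n)) (q : EuclideanSpace ℝ (Fin n))
    (hp : ∀ i, p i ≠ 0) (hq : q ≠ 0)
    (t : Fin m → ℝ) (w : ℝ → ℝ)
    (ps : Fin m → EuclideanSpace ℝ (Fin n)) (qs : EuclideanSpace ℝ (Fin n))
    (hps : ∀ i, (inner ℝ (ps i) (p i) : ℝ) = N (p i) ∧ dualNorm N (ps i) = 1)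
    (hqs : (inner ℝ qs q : ℝ) = N q ∧ dualNorm N qs = 1)
    (hmin : ∀ s : EuclideanSpace ℝ (Fin n),
      ∑ i, w (t i) * N (p i) + w (∑ i, t i) * N q ≤
        ∑ i, w (t i) * N (p i - s) + w (∑ i, t i) * N (q - s)) :
    ∑ i, w (t i) • ps i + w (∑ i, t i) • qs = 0 := by
  have hgrad_p (i : Fin m) : HasGradientAt N (ps i) (p i) :=
    hasGradientAt_of_inner_le (hsmooth _ (hp i)) (hps i).1
      (inner_le_of_dualNorm_eq_one hN (hps i).2)
  have hgrad_q : HasGradientAt N qs q :=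
    hasGradientAt_of_inner_le (hsmooth _ hq) hqs.1 (inner_le_of_dualNorm_eq_one hN hqs.2)
  have hcost := (HasFDerivAt.fun_sum (u := Finset.univ) fun i _ =>
    (hgrad_p i).const_mul_comp_const_sub (w (t i))).add
      (hgrad_q.const_mul_comp_const_sub (w (∑ i, t i)))
  have hcrit : IsLocalMin
      (fun s => ∑ i, w (t i) * N (p i - s) + w (∑ i, t i) * N (q - s)) 0 :=
    Filter.Eventually.of_forall fun s => by simpa using hmin s
  have hderiv_zero := hcrit.hasFDerivAt_eq_zero hcost
  rwa [← map_sum, ← map_add, LinearIsometryEquiv.map_eq_zero_iff, Finset.sum_neg_distrib,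
    ← neg_add, neg_eq_zero] at hderiv_zero

/-- Necessity of the balancing condition at a Steiner point of a minimum
Gilbert arborescence star. -/
theorem balancing_necessary {n m : ℕ} (N : EuclideanSpace ℝ (Fin n) → ℝ)
    (hN : IsNorm N)
    (hsmooth : ∀ x : EuclideanSpace ℝ (Fin n), x ≠ 0 → DifferentiableAt ℝ N x)
    (p : Fin m → EuclideanSpace ℝ (Fin n)) (q : EuclideanSpace ℝ (Fin n))
    (hp : ∀ i, p i ≠ 0) (hq : q ≠ 0)
    (t : Fin m → ℝ) (ht : ∀ i, 0 < t i) (w : ℝ → ℝ)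
    (ps : Fin m → EuclideanSpace ℝ (Fin n)) (qs : EuclideanSpace ℝ (Fin n))
    (hps : ∀ i, (inner ℝ (ps i) (p i) : ℝ) = N (p i) ∧ dualNorm N (ps i) = 1)
    (hqs : (inner ℝ qs q : ℝ) = N q ∧ dualNorm N qs = 1)
    (hmin : ∀ s : EuclideanSpace ℝ (Fin n),
      ∑ i, w (t i) * N (p i) + w (∑ i, t i) * N q ≤
        ∑ i, w (t i) * N (p i - s) + w (∑ i, t i) * N (q - s)) :
    ∑ i, w (t i) • ps i + w (∑ i, t i) • qs = 0 :=
  balancing_necessary_general N hN hsmooth p q hp hq t w ps qs hps hqs hmin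
end

section
/- (Necessity of the collapsing condition.) With notation as in the balancing condition: if for every subset I ⊆ {1,…,m}, every unit vector e, and every t > 0, the split network cost Σ_{i∈I} w(t_i)‖p_i − te‖ + w(Σ_{i=1}^m t_i)·t + Σ_{i∉I} w(t_i)‖p_i‖ + w(Σ_{i=1}^m t_i)‖q‖ is at least the star cost Σ_{i=1}^m w(t_i)‖p_i‖ + w(Σ_{i=1}^m t_i)‖q‖, then ‖Σ_{i∈I} w(t_i) p_i*‖* ≤ w(Σ_{i=1}^m t_i) for all I ⊆ {1,…,m}. -/
/-!
The dual vector `p_i*` is the gradient of the norm at `p_i`: it is a linear minorant of the norm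
touching it at `p_i`, where the norm is differentiable. Hence moving the junction of the
sources in `I` from `o` to `τ • e` changes the cost by
`τ * (w (∑ t_i) - ⟪∑_{i ∈ I} w (t_i) • p_i*, e⟫) + o(τ)`. If splitting never pays, this first-order coefficient is
nonnegative for every unit vector `e`, which is the bound on the dual norm.
-/

open Set

section Calculus

variable {E : Type*} [NormedAddCommGroup E] [NormedSpace ℝ E]

theorem DifferentiableAt.hasFDerivAt_of_le_of_eq {f : E → ℝ} {ℓ : E →L[ℝ] ℝ} {a : E}
    (hf : DifferentiableAt ℝ f a) (hle : ∀ y, ℓ y ≤ f y) (heq : f a = ℓ a) :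
    HasFDerivAt f ℓ a := by
  have hmin : IsLocalMin (fun y => f y - ℓ y) a :=
    IsMinOn.isLocalMin (fun y _ => by simpa [heq] using hle y) Filter.univ_mem
  have hzero := hmin.hasFDerivAt_eq_zero (hf.hasFDerivAt.sub ℓ.hasFDerivAt)
  rw [sub_eq_zero] at hzero
  exact hzero ▸ hf.hasFDerivAt

theorem IsLocalMinOn.hasDerivAt_nonneg_of_Ici {φ : ℝ → ℝ} {φ' a : ℝ}
    (hmin : IsLocalMinOn φ (Ici a) a) (hφ : HasDerivAt φ φ' a) : 0 ≤ φ' := by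
  have hdir : (1 : ℝ) ∈ posTangentConeAt (Ici a) a :=
    mem_posTangentConeAt_of_segment_subset <|
      (segment_subset_Icc (by simp)).trans Icc_subset_Ici_self
  simpa using hmin.hasFDerivWithinAt_nonneg hφ.hasFDerivAt.hasFDerivWithinAt hdir

end Calculus

section InnerProductSpace

variable {E : Type*} [NormedAddCommGroup E] [InnerProductSpace ℝ E] {ι : Type*}

theorem hasDerivAt_sum_mul_sub_smul {N : E → ℝ} {s : Finset ι} {c : ι → ℝ}
    {p g : ι → E}
    (hN : ∀ i ∈ s, HasFDerivAt N (innerSL ℝ (g i)) (p i)) (e : E) :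
    HasDerivAt (fun τ : ℝ => ∑ i ∈ s, c i * N (p i - τ • e))
      (-inner ℝ (∑ i ∈ s, c i • g i) e) 0 := by
  have hval :
      ∑ i ∈ s, c i * innerSL ℝ (g i) (-e) = -inner ℝ (∑ i ∈ s, c i • g i) e := by
    simp only [innerSL_apply_apply, inner_neg_right, sum_inner, real_inner_smul_left, mul_neg,
      Finset.sum_neg_distrib]
  refine hval ▸ HasDerivAt.fun_sum fun i hi => ?_
  have hline : HasDerivAt (fun τ : ℝ => p i - τ • e) (-e) 0 := by
    simpa using ((hasDerivAt_id (0 : ℝ)).smul_const e).const_sub (p i)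
  exact ((hN i hi).comp_hasDerivAt_of_eq 0 hline (by simp)).const_mul (c i)

end InnerProductSpace

namespace IsNorm

variable {n : ℕ} {N : EuclideanSpace ℝ (Fin n) → ℝ}

theorem map_zero (hN : IsNorm N) : N 0 = 0 := (hN.2.1 0).2 rfl

theorem inner_le_mul_of_forall_unit (hN : IsNorm N) {z : EuclideanSpace ℝ (Fin n)} {c : ℝ}
    (h : ∀ e, N e = 1 → inner ℝ z e ≤ c) (x : EuclideanSpace ℝ (Fin n)) :
    inner ℝ z x ≤ c * N x := by
  rcases eq_or_ne x 0 with rfl | hx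
  · simp [hN.map_zero]
  have hNx : 0 < N x := (hN.1 x).lt_of_ne' (mt (hN.2.1 x).1 hx)
  have hunit : N ((N x)⁻¹ • x) = 1 := by
    rw [hN.2.2.1, abs_of_pos (inv_pos.2 hNx), inv_mul_cancel₀ hNx.ne']
  calc inner ℝ z x = N x * inner ℝ z ((N x)⁻¹ • x) := by
        rw [real_inner_smul_right, mul_inv_cancel_left₀ hNx.ne']
    _ ≤ N x * c := mul_le_mul_of_nonneg_left (h _ hunit) hNx.le
    _ = c * N x := mul_comm _ _

theorem inner_le_of_dualNorm_eq_one (hN : IsNorm N) {z : EuclideanSpace ℝ (Fin n)}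
    (hz : dualNorm N z = 1) (x : EuclideanSpace ℝ (Fin n)) : inner ℝ z x ≤ N x := by
  have hbdd : BddAbove ((fun x => inner ℝ z x) '' {x | N x ≤ 1}) := by
    by_contra hunbdd
    rw [dualNorm, Real.sSup_of_not_bddAbove hunbdd] at hz
    exact zero_ne_one hz
  simpa using hN.inner_le_mul_of_forall_unit (c := 1)
    (fun e he => (le_csSup hbdd ⟨e, he.le, rfl⟩).trans_eq hz) x

theorem dualNorm_le_of_forall_unit (hN : IsNorm N) {z : EuclideanSpace ℝ (Fin n)} {c : ℝ}
    (hc : 0 ≤ c) (h : ∀ e, N e = 1 → inner ℝ z e ≤ c) : dualNorm N z ≤ c := by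
  refine Real.sSup_le ?_ hc
  rintro _ ⟨x, hx, rfl⟩
  exact (hN.inner_le_mul_of_forall_unit h x).trans (mul_le_of_le_one_right hc hx)

end IsNorm

theorem collapsing_necessary_general {n m : ℕ} (N : EuclideanSpace ℝ (Fin n) → ℝ)
    (hN : IsNorm N)
    (hsmooth : ∀ x : EuclideanSpace ℝ (Fin n), x ≠ 0 → DifferentiableAt ℝ N x)
    (p : Fin m → EuclideanSpace ℝ (Fin n)) (q : EuclideanSpace ℝ (Fin n))
    (hp : ∀ i, p i ≠ 0)
    (t : Fin m → ℝ) (w : ℝ → ℝ) (hw : ∀ s, 0 ≤ w s)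
    (ps : Fin m → EuclideanSpace ℝ (Fin n))
    (hps : ∀ i, (inner ℝ (ps i) (p i) : ℝ) = N (p i) ∧ dualNorm N (ps i) = 1)
    (hsplit : ∀ (I : Finset (Fin m)) (e : EuclideanSpace ℝ (Fin n)) (τ : ℝ),
      N e = 1 → 0 < τ →
        ∑ i, w (t i) * N (p i) + w (∑ i, t i) * N q ≤
          ∑ i ∈ I, w (t i) * N (p i - τ • e) + w (∑ i, t i) * τ +
            ∑ i ∈ Iᶜ, w (t i) * N (p i) + w (∑ i, t i) * N q) :
    ∀ I : Finset (Fin m),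
      dualNorm N (∑ i ∈ I, w (t i) • ps i) ≤ w (∑ i, t i) := by
  intro I
  set W := w (∑ i, t i)
  have hgrad : ∀ i, HasFDerivAt N (innerSL ℝ (ps i)) (p i) := fun i =>
    (hsmooth _ (hp i)).hasFDerivAt_of_le_of_eq (hN.inner_le_of_dualNorm_eq_one (hps i).2)
      (hps i).1.symm
  refine hN.dualNorm_le_of_forall_unit (hw _) fun e he => ?_
  set φ : ℝ → ℝ := fun τ => ∑ i ∈ I, w (t i) * N (p i - τ • e) + W * τ
  have hφ : HasDerivAt φ (-inner ℝ (∑ i ∈ I, w (t i) • ps i) e + W * 1) 0 :=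
    (hasDerivAt_sum_mul_sub_smul (fun i _ => hgrad i) e).add ((hasDerivAt_id 0).const_mul W)
  have hmin : IsMinOn φ (Ici 0) (0 : ℝ) := by
    intro τ (hτ : 0 ≤ τ)
    show φ 0 ≤ φ τ
    rcases hτ.eq_or_lt with rfl | hτ
    · exact le_rfl
    have hcost := hsplit I e τ he hτ
    rw [← Finset.sum_add_sum_compl I] at hcost
    simp only [φ, zero_smul, sub_zero, mul_zero, add_zero]
    linarith
  linarith [hmin.localize.hasDerivAt_nonneg_of_Ici hφ]

/-- Necessity of the collapsing condition at a Steiner point of a minimum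
Gilbert arborescence star. -/
theorem collapsing_necessary {n m : ℕ} (N : EuclideanSpace ℝ (Fin n) → ℝ)
    (hN : IsNorm N)
    (hsmooth : ∀ x : EuclideanSpace ℝ (Fin n), x ≠ 0 → DifferentiableAt ℝ N x)
    (p : Fin m → EuclideanSpace ℝ (Fin n)) (q : EuclideanSpace ℝ (Fin n))
    (hp : ∀ i, p i ≠ 0) (hq : q ≠ 0)
    (t : Fin m → ℝ) (ht : ∀ i, 0 < t i) (w : ℝ → ℝ) (hw : ∀ s, 0 ≤ w s)
    (ps : Fin m → EuclideanSpace ℝ (Fin n))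
    (hps : ∀ i, (inner ℝ (ps i) (p i) : ℝ) = N (p i) ∧ dualNorm N (ps i) = 1)
    (hsplit : ∀ (I : Finset (Fin m)) (e : EuclideanSpace ℝ (Fin n)) (τ : ℝ),
      N e = 1 → 0 < τ →
        ∑ i, w (t i) * N (p i) + w (∑ i, t i) * N q ≤
          ∑ i ∈ I, w (t i) * N (p i - τ • e) + w (∑ i, t i) * τ +
            ∑ i ∈ Iᶜ, w (t i) * N (p i) + w (∑ i, t i) * N q) :
    ∀ I : Finset (Fin m),
      dualNorm N (∑ i ∈ I, w (t i) • ps i) ≤ w (∑ i, t i) :=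
  collapsing_necessary_general N hN hsmooth p q hp t w hw ps hps hsplit
end

section
/- (Cost-decreasing split on a flat piece of the unit sphere.) Suppose ‖·‖ on ℝ² satisfies ‖s₂ − s₁‖ + ‖s₁‖ = ‖s₂‖ for points s₁ ≠ 0 and s₂, where s₁ lies on segment p₁o, s₂ lies on segment p₂o, and ‖p₁ − o‖ = ‖p₁ − s₁‖ + ‖s₁‖, ‖p₂ − o‖ = ‖p₂ − s₂‖ + ‖s₂‖. Then for the linear weight w(t) = d + ht with d > 0, h ≥ 0, the rerouted network replacing edges p₁o (flow t₁) and p₂o (flow t₂) by p₁s₁ (flow t₁), p₂s₂ (flow t₂), s₂s₁ (flow t₂), and s₁o (flow t₁+t₂) changes the total cost by exactly −d‖s₁‖ < 0. -/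
def IsNorm2 (N : EuclideanSpace ℝ (Fin 2) → ℝ) : Prop :=
  (∀ x, 0 ≤ N x) ∧ (∀ x, N x = 0 ↔ x = 0) ∧
  (∀ (a : ℝ) (x : EuclideanSpace ℝ (Fin 2)), N (a • x) = |a| * N x) ∧
  (∀ x y, N (x + y) ≤ N x + N y)

/-- Cost-decreasing split on a flat piece of the unit sphere: rerouting the
flows `t₁, t₂` through the points `s₁, s₂` changes the total cost by exactly
`−d‖s₁‖ < 0` for the linear weight `w(t) = d + h t`. -/
theorem cost_decreasing_split (N : EuclideanSpace ℝ (Fin 2) → ℝ)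
    (hN : IsNorm2 N)
    (p₁ p₂ s₁ s₂ : EuclideanSpace ℝ (Fin 2)) (hs₁ : s₁ ≠ 0)
    (d h t₁ t₂ : ℝ) (hd : 0 < d) (hh : 0 ≤ h)
    (w : ℝ → ℝ) (hw : ∀ s : ℝ, w s = d + h * s)
    (hflat : N (s₂ - s₁) + N s₁ = N s₂)
    (hseg₁ : s₁ ∈ segment ℝ (0 : EuclideanSpace ℝ (Fin 2)) p₁)
    (hseg₂ : s₂ ∈ segment ℝ (0 : EuclideanSpace ℝ (Fin 2)) p₂)
    (hadd₁ : N p₁ = N (p₁ - s₁) + N s₁)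
    (hadd₂ : N p₂ = N (p₂ - s₂) + N s₂) :
    (w t₁ * N (p₁ - s₁) + w (t₁ + t₂) * N s₁ + w t₂ * N (p₂ - s₂) +
          w t₂ * N (s₂ - s₁)) -
        (w t₁ * N p₁ + w t₂ * N p₂) = -d * N s₁ ∧
      -d * N s₁ < 0 := by
  have hpos : 0 < N s₁ := by
    rcases hN with ⟨h0, h1, _⟩
    rcases lt_or_eq_of_le (h0 s₁) with hlt | heq
    · exact hlt
    · exact absurd ((h1 s₁).mp heq.symm) hs₁
  constructor
  · simp only [hw]
    rw [hadd₁, hadd₂, ← hflat]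
    ring
  · nlinarith
end
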